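/- arXiv:0808.1133 — 2 statements merged into one kernel-verified Lean document; each statement's English description precedes it below -/
import Mathlib

section
/- If h : ℝ → ℝ is concave on the interval (0, x₀), then the function x ↦ x·h(x) − 2·∫₀ˣ h(s) ds is concave on (0, x₀). -/
/-!
Formally `F x = x * h x - 2 * ∫₀ˣ h` has `F'' = x h''`, so `F` is concave where `h` is and
`x > 0`. Without derivatives: at each `c` the concave `h` has a supergradient `m`, and `F` lies
below the line through `(c, F c)` of slope `c m - h c` (formally `F' c`). Left of `c` this follows
from bounding `h` by its supporting line; right of `c`, from the trapezoid lower bound for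
`∫_c^u h` together with `c h u ≤ c (h c + m (u - c))`.
-/

open Set MeasureTheory intervalIntegral

theorem concaveOn_of_forall_exists_le_add_linearMap {E : Type*} [AddCommGroup E] [Module ℝ E]
    {s : Set E} {f : E → ℝ} (hs : Convex ℝ s)
    (hsupp : ∀ c ∈ s, ∃ L : E →ₗ[ℝ] ℝ, ∀ u ∈ s, f u ≤ f c + L (u - c)) :
    ConcaveOn ℝ s f := by
  refine ⟨hs, fun a ha b hb t r ht hr htr => ?_⟩
  obtain ⟨L, hL⟩ := hsupp _ (hs ha hb ht hr htr)
  have hLc : L (t • a + r • b) = t * L a + r * L b := by simp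
  have hLa := hL a ha
  have hLb := hL b hb
  simp only [map_sub, hLc, smul_eq_mul] at hLa hLb ⊢
  linear_combination t * hLa + r * hLb + (f (t • a + r • b) - t * L a - r * L b) * htr

theorem ConcaveOn.exists_le_add_mul_sub {S : Set ℝ} {h : ℝ → ℝ} (hh : ConcaveOn ℝ S h)
    {c : ℝ} (hc : c ∈ interior S) : ∃ m, ∀ u ∈ S, h u ≤ h c + m * (u - c) := by
  have hg := hh.neg
  refine ⟨-derivWithin (-h) (Ioi c) c, fun u hu => ?_⟩
  rcases lt_trichotomy u c with huc | rfl | hcu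
  · have hslope := (hg.slope_le_leftDeriv_of_mem_interior hu hc huc).trans
      (hg.leftDeriv_le_rightDeriv_of_mem_interior hc)
    rw [slope_def_field, div_le_iff₀ (sub_pos.2 huc)] at hslope
    simp only [Pi.neg_apply] at hslope
    linarith
  · simp
  · have hslope := hg.rightDeriv_le_slope_of_mem_interior hc hu hcu
    rw [slope_def_field, le_div_iff₀ (sub_pos.2 hcu)] at hslope
    simp only [Pi.neg_apply] at hslope
    linarith

theorem ConcaveOn.chord_le_of_mem_Icc {h : ℝ → ℝ} {a b v : ℝ}
    (hh : ConcaveOn ℝ (Icc a b) h) (hv : v ∈ Icc a b) :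
    (b - a) * h a + (h b - h a) * (v - a) ≤ (b - a) * h v := by
  rcases hv.1.eq_or_lt with rfl | hav
  · linarith
  rcases hv.2.eq_or_lt with rfl | hvb
  · linarith
  have := hh.neg.secant_mono_aux1 (left_mem_Icc.2 (hav.le.trans hvb.le))
    (right_mem_Icc.2 (hav.le.trans hvb.le)) hav hvb
  simp only [Pi.neg_apply] at this
  linear_combination this

theorem integral_add_mul_sub (a b α β γ : ℝ) :
    ∫ x in a..b, (α + β * (x - γ)) =
      α * (b - a) + β * ((b - γ) ^ 2 - (a - γ) ^ 2) / 2 := by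
  rw [integral_eq_sub_of_hasDerivAt (f := fun x => α * x + β * (x - γ) ^ 2 / 2)]
  · ring
  · intro x _
    exact (((hasDerivAt_id' x).const_mul α).add
      ((((hasDerivAt_id' x).sub_const γ).pow 2).const_mul β |>.div_const 2)).congr_deriv
      (by ring)
  · exact (by fun_prop : Continuous fun x : ℝ => α + β * (x - γ)).intervalIntegrable a b

theorem ConcaveOn.trapezoid_le_integral {h : ℝ → ℝ} {a b : ℝ}
    (hh : ConcaveOn ℝ (Icc a b) h) (hab : a ≤ b) (hint : IntervalIntegrable h volume a b) :
    (b - a) * ((h a + h b) / 2) ≤ ∫ x in a..b, h x := by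
  rcases hab.eq_or_lt with rfl | hab
  · simp
  have hchord_cont : Continuous fun x : ℝ => (b - a) * h a + (h b - h a) * (x - a) := by
    fun_prop
  have hchord : ∫ x in a..b, ((b - a) * h a + (h b - h a) * (x - a)) ≤
      ∫ x in a..b, (b - a) * h x :=
    integral_mono_on hab.le (hchord_cont.intervalIntegrable a b) (hint.const_mul _)
      fun x hx => hh.chord_le_of_mem_Icc hx
  rw [integral_add_mul_sub, intervalIntegral.integral_const_mul] at hchord
  refine le_of_mul_le_mul_left ?_ (sub_pos.2 hab)
  linear_combination hchord

theorem mul_add_two_integral_le_of_forall_le {h : ℝ → ℝ} {u c m : ℝ}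
    (hu : 0 ≤ u) (huc : u ≤ c)
    (hm : ∀ v ∈ Icc u c, h v ≤ h c + m * (v - c)) (hint : IntervalIntegrable h volume u c) :
    u * h u + 2 * ∫ v in u..c, h v ≤ c * h c + (c * m - h c) * (u - c) := by
  have hupper : ∫ v in u..c, h v ≤ ∫ v in u..c, (h c + m * (v - c)) :=
    integral_mono_on huc hint
      ((by fun_prop : Continuous fun v : ℝ => h c + m * (v - c)).intervalIntegrable u c) hm
  rw [integral_add_mul_sub] at hupper
  have hhu : u * h u ≤ u * (h c + m * (u - c)) :=
    mul_le_mul_of_nonneg_left (hm u (left_mem_Icc.2 huc)) hu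
  linear_combination hhu + 2 * hupper

theorem ConcaveOn.mul_sub_two_integral_le_of_le {h : ℝ → ℝ} {u c m : ℝ}
    (hh : ConcaveOn ℝ (Icc c u) h) (hc : 0 ≤ c) (hcu : c ≤ u) (hm : h u ≤ h c + m * (u - c))
    (hint : IntervalIntegrable h volume c u) :
    u * h u - 2 * ∫ v in c..u, h v ≤ c * h c + (c * m - h c) * (u - c) := by
  have hlower := hh.trapezoid_le_integral hcu hint
  have hhu : c * h u ≤ c * (h c + m * (u - c)) := mul_le_mul_of_nonneg_left hm hc
  linear_combination hhu + 2 * hlower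

theorem ConcaveOn.mul_sub_two_integral_le {h : ℝ → ℝ} {S : Set ℝ} (hh : ConcaveOn ℝ S h)
    (hS : S ⊆ Ici 0) {c u m : ℝ} (hc : c ∈ S) (hu : u ∈ S)
    (hm : ∀ v ∈ S, h v ≤ h c + m * (v - c)) (hint : IntervalIntegrable h volume c u) :
    u * h u - 2 * ∫ v in c..u, h v ≤ c * h c + (c * m - h c) * (u - c) := by
  rcases le_total u c with huc | hcu
  · have := mul_add_two_integral_le_of_forall_le (hS hu) huc
      (fun v hv => hm v (hh.1.ordConnected.out hu hc hv)) hint.symm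
    rw [integral_symm]
    linarith
  · have hIcc : ConcaveOn ℝ (Icc c u) h :=
      hh.subset (hh.1.ordConnected.out hc hu) (convex_Icc c u)
    exact hIcc.mul_sub_two_integral_le_of_le (hS hc) hcu (hm u hu) hint

theorem stmt_1_general (h : ℝ → ℝ) (x₀ : ℝ)
    (hconc : ConcaveOn ℝ (Set.Ioo 0 x₀) h)
    (hint : ∀ x ∈ Set.Ioo (0:ℝ) x₀, IntervalIntegrable h MeasureTheory.volume 0 x) :
    ConcaveOn ℝ (Set.Ioo 0 x₀)
      (fun x => x * h x - 2 * ∫ s in (0:ℝ)..x, h s) := by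
  refine concaveOn_of_forall_exists_le_add_linearMap (convex_Ioo 0 x₀) fun c hc => ?_
  obtain ⟨m, hm⟩ := hconc.exists_le_add_mul_sub (by rwa [interior_Ioo])
  refine ⟨LinearMap.mulLeft ℝ (c * m - h c), fun u hu => ?_⟩
  have hsplit := integral_interval_sub_left (hint u hu) (hint c hc)
  have hsupp := hconc.mul_sub_two_integral_le (fun v hv => hv.1.le) hc hu hm
    ((hint c hc).symm.trans (hint u hu))
  rw [LinearMap.mulLeft_apply]
  linarith

theorem stmt_1 (h : ℝ → ℝ) (x₀ : ℝ) (hx₀ : 0 < x₀)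
    (hconc : ConcaveOn ℝ (Set.Ioo 0 x₀) h)
    (hint : ∀ x ∈ Set.Ioo (0:ℝ) x₀, IntervalIntegrable h MeasureTheory.volume 0 x) :
    ConcaveOn ℝ (Set.Ioo 0 x₀)
      (fun x => x * h x - 2 * ∫ s in (0:ℝ)..x, h s) :=
  stmt_1_general h x₀ hconc hint
end

section
/- Let H be a self-adjoint operator on a finite-dimensional Hilbert space with orthonormal eigenbasis {φ_k}, eigenvalues {λ_k}, J a subset of indices, and G self-adjoint. If f ∈ C¹(ℝ) with f' concave, then ∑_{j∈J} ∑_{k∈J} f(λ_j)(λ_k − λ_j)|⟨Gφ_j,φ_k⟩|² ≤ −(1/2) ∑_{j∈J} ∑_{k∈J} f'(λ_j)(λ_k − λ_j)²|⟨Gφ_j,φ_k⟩|². -/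
/-!
With the symmetric weights `w j k = ‖⟪G φ_j, φ_k⟫‖²`, symmetrising the double sums in `j ↔ k` turns
the left side into `-½ ∑∑ (f λ_k - f λ_j)(λ_k - λ_j) w` and the right side into
`-¼ ∑∑ (f' λ_j + f' λ_k)(λ_k - λ_j)² w`, so it suffices to compare them termwise. That comparison is
`(f' x + f' y)/2 · (y - x) ≤ f y - f x`, the trapezoid half of the Hermite–Hadamard inequality for
the concave function `f'`: on `[x, y]` it lies above its chord, and integrating gives the claim.
-/

open scoped InnerProductSpace
open Set intervalIntegral

lemma ConcaveOn.chord_le {g : ℝ → ℝ} {x y t : ℝ} (hg : ConcaveOn ℝ (Icc x y) g) (hxy : x < y)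
    (ht : t ∈ Icc x y) : ((y - t) * g x + (t - x) * g y) / (y - x) ≤ g t := by
  have hyx : y - x ≠ 0 := sub_ne_zero.2 hxy.ne'
  have key := hg.2 (left_mem_Icc.2 hxy.le) (right_mem_Icc.2 hxy.le)
    (div_nonneg (sub_nonneg.2 ht.2) (sub_nonneg.2 hxy.le))
    (div_nonneg (sub_nonneg.2 ht.1) (sub_nonneg.2 hxy.le)) (by field_simp; ring)
  have ht' : ((y - t) / (y - x)) • x + ((t - x) / (y - x)) • y = t := by
    simp only [smul_eq_mul]; field_simp; ring
  rw [ht'] at key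
  simpa only [smul_eq_mul, add_div, mul_div_right_comm] using key

lemma integral_chord (a b x y : ℝ) (hxy : x < y) :
    ∫ t in x..y, ((y - t) * a + (t - x) * b) / (y - x) = (a + b) / 2 * (y - x) := by
  have hyx : y - x ≠ 0 := sub_ne_zero.2 hxy.ne'
  rw [integral_eq_sub_of_hasDerivAt
    (f := fun t => ((t - x) ^ 2 * b - (y - t) ^ 2 * a) / (2 * (y - x))) (fun t _ => ?_)
    (Continuous.intervalIntegrable (by fun_prop) _ _)]
  · field_simp; ring
  · refine ((((((hasDerivAt_id t).sub_const x).pow 2).mul_const b).sub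
      ((((hasDerivAt_id t).const_sub y).pow 2).mul_const a)).div_const (2 * (y - x))).congr_deriv ?_
    simp only [id, Nat.cast_ofNat]
    field_simp
    ring

lemma ConcaveOn.trapezoid_le_integral_s8 {g : ℝ → ℝ} {x y : ℝ} (hg : ConcaveOn ℝ (Icc x y) g)
    (hgc : ContinuousOn g (Icc x y)) (hxy : x ≤ y) :
    (g x + g y) / 2 * (y - x) ≤ ∫ t in x..y, g t := by
  rcases hxy.eq_or_lt with rfl | hxy
  · simp
  rw [← integral_chord _ _ _ _ hxy]
  exact integral_mono_on hxy.le (Continuous.intervalIntegrable (by fun_prop) _ _)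
    (hgc.intervalIntegrable_of_Icc hxy.le) fun t ht => hg.chord_le hxy ht

lemma trapezoid_le_sub_of_concaveOn_deriv {f : ℝ → ℝ} (hf : ContDiff ℝ 1 f)
    (hconc : ConcaveOn ℝ univ (deriv f)) {x y : ℝ} (hxy : x ≤ y) :
    (deriv f x + deriv f y) / 2 * (y - x) ≤ f y - f x := by
  have hcont : Continuous (deriv f) := hf.continuous_deriv le_rfl
  rw [← integral_deriv_eq_sub (fun t _ => hf.differentiable one_ne_zero t)
    (hcont.intervalIntegrable x y)]
  exact (hconc.subset (subset_univ _) (convex_Icc x y)).trapezoid_le_integral_s8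
    hcont.continuousOn hxy

lemma trapezoid_mul_le_of_concaveOn_deriv {f : ℝ → ℝ} (hf : ContDiff ℝ 1 f)
    (hconc : ConcaveOn ℝ univ (deriv f)) (x y : ℝ) :
    (deriv f x + deriv f y) / 2 * (y - x) ^ 2 ≤ (f y - f x) * (y - x) := by
  wlog hxy : x ≤ y generalizing x y
  · convert this y x (le_of_not_ge hxy) using 1 <;> ring
  rw [sq, ← mul_assoc]
  exact mul_le_mul_of_nonneg_right (trapezoid_le_sub_of_concaveOn_deriv hf hconc hxy)
    (sub_nonneg.2 hxy)

lemma Finset.sum_sum_mul_eq_half_sum_sum_add_swap {ι : Type*} (J : Finset ι) (g w : ι → ι → ℝ)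
    (hw : ∀ j k, w j k = w k j) :
    ∑ j ∈ J, ∑ k ∈ J, g j k * w j k = 1 / 2 * ∑ j ∈ J, ∑ k ∈ J, (g j k + g k j) * w j k := by
  have hswap : ∑ j ∈ J, ∑ k ∈ J, g k j * w j k = ∑ j ∈ J, ∑ k ∈ J, g j k * w j k := by
    rw [Finset.sum_comm]; simp only [hw]
  simp only [add_mul, Finset.sum_add_distrib, hswap]
  ring

lemma sum_sum_mul_sub_le_of_trapezoid_mul_le {ι : Type*} (J : Finset ι) (lam : ι → ℝ)
    (w : ι → ι → ℝ) (hw : ∀ j k, w j k = w k j) (hw0 : ∀ j k, 0 ≤ w j k) (f f' : ℝ → ℝ)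
    (key : ∀ x y, (f' x + f' y) / 2 * (y - x) ^ 2 ≤ (f y - f x) * (y - x)) :
    ∑ j ∈ J, ∑ k ∈ J, f (lam j) * (lam k - lam j) * w j k
      ≤ -(1/2) * ∑ j ∈ J, ∑ k ∈ J, f' (lam j) * (lam k - lam j) ^ 2 * w j k := by
  calc ∑ j ∈ J, ∑ k ∈ J, f (lam j) * (lam k - lam j) * w j k
      = 1 / 2 * ∑ j ∈ J, ∑ k ∈ J,
          (f (lam j) * (lam k - lam j) + f (lam k) * (lam j - lam k)) * w j k :=
        Finset.sum_sum_mul_eq_half_sum_sum_add_swap J _ w hw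
    _ ≤ 1 / 2 * ∑ j ∈ J, ∑ k ∈ J, -(1 / 2) *
          ((f' (lam j) * (lam k - lam j) ^ 2 + f' (lam k) * (lam j - lam k) ^ 2) * w j k) := by
        refine mul_le_mul_of_nonneg_left
          (Finset.sum_le_sum fun j _ => Finset.sum_le_sum fun k _ => ?_) (by norm_num)
        nlinarith [key (lam j) (lam k), hw0 j k]
    _ = -(1/2) * ∑ j ∈ J, ∑ k ∈ J, f' (lam j) * (lam k - lam j) ^ 2 * w j k := by
        rw [Finset.sum_sum_mul_eq_half_sum_sum_add_swap J _ w hw]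
        simp only [← Finset.mul_sum]
        ring

lemma IsSelfAdjoint.norm_inner_apply_comm {E : Type*} [NormedAddCommGroup E]
    [InnerProductSpace ℂ E] [CompleteSpace E] {G : E →L[ℂ] E} (hG : IsSelfAdjoint G) (x y : E) :
    ‖⟪G x, y⟫_ℂ‖ = ‖⟪G y, x⟫_ℂ‖ := by
  rw [show ⟪G x, y⟫_ℂ = ⟪x, G y⟫_ℂ from hG.isSymmetric x y, ← inner_conj_symm, RCLike.norm_conj]

theorem stmt_8_general {E : Type*} [NormedAddCommGroup E] [InnerProductSpace ℂ E]
    [FiniteDimensional ℂ E] (N : ℕ)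
    (G : E →L[ℂ] E) (hG : IsSelfAdjoint G)
    (φ : Fin N → E) (lam : Fin N → ℝ)
    (J : Finset (Fin N)) (f : ℝ → ℝ) (hf : ContDiff ℝ 1 f)
    (hconc : ConcaveOn ℝ Set.univ (deriv f)) :
    ∑ j ∈ J, ∑ k ∈ J, f (lam j) * (lam k - lam j) * ‖⟪G (φ j), φ k⟫_ℂ‖ ^ 2
      ≤ -(1/2) * ∑ j ∈ J, ∑ k ∈ J,
          deriv f (lam j) * (lam k - lam j) ^ 2 * ‖⟪G (φ j), φ k⟫_ℂ‖ ^ 2 :=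
  sum_sum_mul_sub_le_of_trapezoid_mul_le J lam _ (fun j k => by rw [hG.norm_inner_apply_comm])
    (fun _ _ => by positivity) f (deriv f) (trapezoid_mul_le_of_concaveOn_deriv hf hconc)

theorem stmt_8 {E : Type*} [NormedAddCommGroup E] [InnerProductSpace ℂ E]
    [FiniteDimensional ℂ E] (N : ℕ)
    (H G : E →L[ℂ] E) (hH : IsSelfAdjoint H) (hG : IsSelfAdjoint G)
    (φ : Fin N → E) (lam : Fin N → ℝ) (hON : Orthonormal ℂ φ)
    (heig : ∀ k, H (φ k) = (lam k : ℂ) • φ k)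
    (J : Finset (Fin N)) (f : ℝ → ℝ) (hf : ContDiff ℝ 1 f)
    (hconc : ConcaveOn ℝ Set.univ (deriv f)) :
    ∑ j ∈ J, ∑ k ∈ J, f (lam j) * (lam k - lam j) * ‖⟪G (φ j), φ k⟫_ℂ‖ ^ 2
      ≤ -(1/2) * ∑ j ∈ J, ∑ k ∈ J,
          deriv f (lam j) * (lam k - lam j) ^ 2 * ‖⟪G (φ j), φ k⟫_ℂ‖ ^ 2 :=
  stmt_8_general N G hG φ lam J f hf hconc
end
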